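/- For every integer n ≥ 6 and every non-hub seed φ with height(φ) = k where 1 < k ≤ n−4: for every i ∈ {1, …, n−3} the i-th son son(φ, i) exists (i.e. there is a seed β with σ^i(φ^(i)) = β̃), every seed β with parent(β) = φ equals son(φ, i) for exactly one such i, and height(son(φ, i)) = Δ(k, i) = min(k−1, n−2−i). -/

import Mathlib

/-- `σ`: cyclic left shift by one position. -/
def sig (l : List ℕ) : List ℕ := l.rotate 1

/-- `τ`: transposition of the first two entries. -/
def tau : List ℕ → List ℕ
  | a :: b :: rest => b :: a :: rest
  | l => l

/-- Apply a word over the alphabet {σ,τ} (encoded: `false` = σ, `true` = τ)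
letter by letter, from left to right. -/
def applyWord (w : List Bool) (l : List ℕ) : List ℕ :=
  w.foldl (fun p c => if c then tau p else sig p) l

/-- `l` is an n-permutation: a sequence containing each of 1,…,n exactly once. -/
def IsPerm (n : ℕ) (l : List ℕ) : Prop := l.Perm (List.range' 1 n)

/-- The permutation (n, n−1, …, 1). -/
def descList (n : ℕ) : List ℕ := (List.range n).reverse.map (· + 1)

/-- Cyclic successor ⊕1 on {1,…,n−1}. -/
def osucc (n a : ℕ) : ℕ := if a = n - 1 then 1 else a + 1

/-- Cyclic predecessor ⊖1 on {1,…,n−1}. -/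
def opred (n a : ℕ) : ℕ := if a = 1 then n - 1 else a - 1

/-- From a seed (a₁, a₂, …, a_{n−1}) form (a₁, a₂⊕1, a₂, …, a_{n−1}). -/
def seedToPerm (n : ℕ) : List ℕ → List ℕ
  | a1 :: a2 :: rest => a1 :: osucc n a2 :: a2 :: rest
  | l => l

/-- ψ is a seed: an (n−1)-tuple of distinct elements of {1,…,n} with first entry n
such that (a₁, a₂⊕1, a₂, …, a_{n−1}) is an n-permutation. -/
def IsSeed (n : ℕ) (ψ : List ℕ) : Prop :=
  ψ.length = n - 1 ∧ ψ.head? = some n ∧ IsPerm n (seedToPerm n ψ)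

/-- The missing element mis(ψ) = a₂⊕1. -/
def mis (n : ℕ) (ψ : List ℕ) : ℕ := osucc n (ψ.getD 1 0)

/-- The package perms(ψ): all permutations obtained by inserting mis(ψ)
at any position of ψ and then taking any cyclic shift. -/
def perms (n : ℕ) (ψ : List ℕ) : Set (List ℕ) :=
  { π | ∃ i j, i ≤ ψ.length ∧ π = (ψ.insertIdx i (mis n ψ)).rotate j }

/-- cycle(π): the set of cyclic shifts of π. -/
def cycle (π : List ℕ) : Set (List ℕ) := { ρ | ∃ j, ρ = π.rotate j }

/-- ψ̃ = (a₁, mis(ψ), a₂, …, a_{n−1}). -/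
def tildeSeed (n : ℕ) (ψ : List ℕ) : List ℕ :=
  match ψ with
  | a1 :: rest => a1 :: mis n ψ :: rest
  | [] => []

/-- ψ^(i) (for 1 ≤ i ≤ n−1): the right cyclic shift of ψ by i−1 positions
with mis(ψ) prepended; for i = n−1 this is (x, a₂, …, a_{n−1}, a₁). -/
def seedShift (n : ℕ) (ψ : List ℕ) (i : ℕ) : List ℕ := mis n ψ :: ψ.rotate (n - i)

/-- Length of the maximal initial run a = b⊕1 in a list. -/
def decRun (n : ℕ) : List ℕ → ℕ
  | a :: b :: rest => if a = osucc n b then decRun n (b :: rest) + 1 else 1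
  | [_] => 1
  | [] => 0

/-- height(ψ): the largest k with aᵢ = a_{i+1}⊕1 for all 2 ≤ i ≤ k. -/
def height (n : ℕ) (ψ : List ℕ) : ℕ := decRun n ψ.tail

/-- The hub seed (n, b, b⊖1, …, b⊖(n−3)). -/
def hubSeed (n b : ℕ) : List ℕ := n :: (List.range (n - 2)).map (fun j => (opred n)^[j] b)

/-- Hubₙ: the set of hub seeds. -/
def Hub (n : ℕ) : Set (List ℕ) := { ψ | ∃ b, 1 ≤ b ∧ b ≤ n - 1 ∧ ψ = hubSeed n b }

/-- `IsParent n ψ β` means ψ = parent(β): ψ, β are neighboring distinct seeds,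
height(ψ) > 1 and mis(ψ) = mis(β)⊕1. -/
def IsParent (n : ℕ) (par child : List ℕ) : Prop :=
  IsSeed n par ∧ IsSeed n child ∧ par ≠ child ∧
  (perms n par ∩ perms n child).Nonempty ∧
  1 < height n par ∧ mis n par = osucc n (mis n child)

/-- `IsSon n β ψ i` means β = son(ψ, i), i.e. β is a seed with σ^i(ψ^(i)) = β̃. -/
def IsSon (n : ℕ) (child par : List ℕ) (i : ℕ) : Prop :=
  IsSeed n child ∧ sig^[i] (seedShift n par i) = tildeSeed n child

/-- γ_k = σ^k τ. -/
def gam (k : ℕ) : List Bool := List.replicate k false ++ [true]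

/-- W_0 = σ and W_k = τ · ∏_{i=1}^{n−2} σ^i W_{Δ(k,i)} γ_{n−2−i},
where Δ(k,i) = min(k−1, n−2−i). -/
def W (n : ℕ) : ℕ → List Bool
  | 0 => [false]
  | k + 1 => true :: ((List.range (n - 2)).map (fun j =>
      List.replicate (j + 1) false ++ W n (min k (n - 2 - (j + 1))) ++
        gam (n - 2 - (j + 1)))).flatten
  termination_by k => k
  decreasing_by omega

/-- V_n = γ_{n−3} · ∏_{i=2}^{n−3} σ^i W_{Δ(n−3,i)} γ_{n−2−i} · σ^{n−1}. -/
def V (n : ℕ) : List Bool :=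
  gam (n - 3) ++
  ((List.range (n - 4)).map (fun j =>
    List.replicate (j + 2) false ++ W n (min (n - 4) (n - 2 - (j + 2))) ++
      gam (n - 2 - (j + 2)))).flatten ++
  List.replicate (n - 1) false

/-- SEQ_n = γ₁^{n−2} σ² (V_n τ)^{n−2} V_n. -/
def SEQ (n : ℕ) : List Bool :=
  (List.replicate (n - 2) (gam 1)).flatten ++ List.replicate 2 false ++
  (List.replicate (n - 2) (V n ++ [true])).flatten ++ V n

/-- r: the first element after the value n in the left-to-right cyclic reading
of π with the entry p₂ skipped. -/
def rVal (n : ℕ) (π : List ℕ) : ℕ :=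
  match π with
  | p1 :: _ :: rest =>
      let l := p1 :: rest
      l.getD ((l.idxOf n + 1) % l.length) 0
  | _ => 0

/-- The Sawada–Williams successor function `next`. -/
def swNext (n : ℕ) (π : List ℕ) : List ℕ :=
  if π = descList n then sig π
  else if π.getD 1 0 ≠ n ∧ π.getD 1 0 = osucc n (rVal n π) then tau π else sig π

/-- GEN(π, α): all permutations visited (including π) when α is applied to π. -/
def GEN (α : List Bool) (π : List ℕ) : Set (List ℕ) :=
  { ρ | ∃ t, t ≤ α.length ∧ ρ = applyWord (α.take t) π }

/-- Tree(ψ): ψ together with all seeds from which ψ is reachable by parent links. -/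
def SeedTree (n : ℕ) (ψ : List ℕ) : Set (List ℕ) :=
  { β | Relation.ReflTransGen (fun x y => IsParent n y x) β ψ }

/-- bunch(ψ) = (⋃_{β ∈ Tree(ψ)} perms(β) ∖ cycle(ψ̃)) ∪ {ψ̃, ψ^(n−1)}. -/
def bunch (n : ℕ) (ψ : List ℕ) : Set (List ℕ) :=
  ((⋃ β ∈ SeedTree n ψ, perms n β) \ cycle (tildeSeed n ψ)) ∪
    {tildeSeed n ψ, seedShift n ψ (n - 1)}

/-- rank(π): the number of initial letters of SEQ_n needed to reach π from
π₀ = τ((n, n−1, …, 1)). -/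
noncomputable def rank (n : ℕ) (π : List ℕ) : ℕ :=
  sInf { t | applyWord ((SEQ n).take t) (tau (descList n)) = π }

/-- SUM(k,j) = |τ · ∏_{i=1}^{j−1} σ^i W_{Δ(k,i)} γ_{n−2−i}| + j. -/
def SUMw (n k j : ℕ) : ℕ :=
  (true :: ((List.range (j - 1)).map (fun m =>
    List.replicate (m + 1) false ++ W n (min (k - 1) (n - 2 - (m + 1))) ++
      gam (n - 2 - (m + 1)))).flatten).length + j

/-- ord(ψ): the position of the entry mis(ψ)⊕1 in ψ, counted from the right end. -/
def ord (n : ℕ) (ψ : List ℕ) : ℕ := ψ.length - ψ.idxOf (osucc n (mis n ψ))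

/-- Length of the continuation of the maximal decreasing subsequence starting
with current value `cur`. -/
def chainLen (n : ℕ) : List ℕ → ℕ → ℕ
  | [], _ => 0
  | b :: rest, cur => if cur = osucc n b then chainLen n rest b + 1 else chainLen n rest cur

/-- level(ψ) = n − m − 3, where m+1 is the length of dec_seq(ψ). -/
def level (n : ℕ) (ψ : List ℕ) : ℕ := n - chainLen n (ψ.drop 2) (ψ.getD 1 0) - 3

/-!
Write φ = (n, a₂, a₃, …, a_{n−1}) and x = mis(φ) = a₂⊕1. Undoing the shift in φ^(i) just inserts x
into φ at position n − i, so σ^i(φ^(i)) = (n, a₂, a₃, …, x, …). As height(φ) ≥ 2 means a₂ = a₃⊕1,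
this is β̃ for the seed β = (n, a₃, …, x, …), and distinct i put x at distinct positions.
Conversely, a child β of φ has mis(β) = a₂, and a common element of the two packages, rotated to
start with n, is both φ with x inserted and β with a₂ inserted. Deleting a₂ recovers β, and x cannot
sit right after n, since then mis(β) = x⊕1 = a₂⊕2 ≠ a₂.
Finally, the inserted x cuts the run a₃, a₄, … (of length k − 1) after n − 2 − i entries and never
continues it: that would close a cycle of ⊕1 of length less than n − 1.
-/

lemma osucc_pos (n a : ℕ) : 0 < osucc n a := by
  unfold osucc; split <;> omega

lemma osucc_inj_of_pos {n a b : ℕ} (ha : 0 < a) (hb : 0 < b) (h : osucc n a = osucc n b) :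
    a = b := by
  unfold osucc at h; split_ifs at h <;> omega

lemma osucc_iterate {n a : ℕ} (hn : 2 ≤ n) (ha : 1 ≤ a) (han : a ≤ n - 1) (m : ℕ) :
    (osucc n)^[m] a = (a - 1 + m) % (n - 1) + 1 := by
  induction m with
  | zero => rw [Nat.mod_eq_of_lt (by omega)]; simp; omega
  | succ m ih =>
    have hlt := Nat.mod_lt (a - 1 + m) (show 0 < n - 1 by omega)
    rw [Function.iterate_succ_apply', ih, ← add_assoc,
      Nat.add_mod_eq_ite (m := a - 1 + m) (n := 1)]
    have h1 : 1 % (n - 1) = if n = 2 then 0 else 1 := by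
      split_ifs with h
      · subst h; rfl
      · exact Nat.mod_eq_of_lt (by omega)
    rw [h1]
    unfold osucc
    split_ifs <;> omega

lemma osucc_iterate_ne_self {n a m : ℕ} (hn : 2 ≤ n) (ha : 1 ≤ a) (han : a ≤ n - 1)
    (hm0 : 0 < m) (hm : m < n - 1) : (osucc n)^[m] a ≠ a := by
  rw [osucc_iterate hn ha han]
  intro h
  have hmod : (a - 1 + m) % (n - 1) = (a - 1 + 0) % (n - 1) := by
    rw [Nat.add_zero, Nat.mod_eq_of_lt (show a - 1 < n - 1 by omega)]; omega
  have := Nat.ModEq.add_left_cancel' (a - 1) hmod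
  rw [Nat.ModEq, Nat.mod_eq_of_lt hm, Nat.zero_mod] at this
  omega

lemma one_le_decRun_cons (n a : ℕ) (l : List ℕ) : 1 ≤ decRun n (a :: l) := by
  cases l with
  | nil => simp [decRun]
  | cons b t => rw [decRun]; split <;> omega

lemma decRun_cons_of_two_le {n a : ℕ} {l : List ℕ} (h : 2 ≤ decRun n (a :: l)) :
    ∃ b t, l = b :: t ∧ a = osucc n b ∧ decRun n (a :: l) = decRun n l + 1 := by
  match l, h with
  | [], h => simp [decRun] at h
  | b :: t, h =>
    rw [decRun] at h ⊢
    split_ifs at h ⊢ with hab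
    · exact ⟨b, t, rfl, hab, rfl⟩
    · omega

lemma getD_zero_eq_osucc_iterate_of_lt_decRun (n : ℕ) :
    ∀ {m : ℕ} {l : List ℕ}, m < decRun n l → l.getD 0 0 = (osucc n)^[m] (l.getD m 0)
  | 0, _, _ => rfl
  | m + 1, [], hm => by simp [decRun] at hm
  | m + 1, a :: l, hm => by
    obtain ⟨b, t, rfl, hab, hrun⟩ := decRun_cons_of_two_le (by omega : 2 ≤ decRun n (a :: l))
    rw [Function.iterate_succ_apply', List.getD_cons_succ,
      ← getD_zero_eq_osucc_iterate_of_lt_decRun n (by omega : m < decRun n (b :: t))]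
    exact hab

lemma decRun_insertIdx {n x : ℕ} :
    ∀ {l : List ℕ} {j : ℕ}, 1 ≤ j → j ≤ l.length →
      (j ≤ decRun n l → l.getD (j - 1) 0 ≠ osucc n x) →
      decRun n (l.insertIdx j x) = min (decRun n l) j
  | [], _, _, hjl, _ => by simp at hjl; omega
  | a :: t, 1, _, _, hx => by
    have hpos := one_le_decRun_cons n a t
    have hax : a ≠ osucc n x := hx hpos
    show decRun n (a :: x :: t) = _
    rw [decRun, if_neg hax]
    omega
  | [_], j + 2, _, hjl, _ => by simp at hjl
  | a :: b :: t, j + 2, _, hjl, hx => by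
    show decRun n (a :: b :: t.insertIdx j x) = min (decRun n (a :: b :: t)) (j + 2)
    rw [decRun, decRun]
    split_ifs with hab
    · have ih := decRun_insertIdx (l := b :: t) (j := j + 1) (by omega)
        (by simp at hjl ⊢; omega) (fun hle => by simpa using hx (by rw [decRun, if_pos hab]; omega))
      rw [show b :: t.insertIdx j x = (b :: t).insertIdx (j + 1) x from rfl, ih]
      omega
    · omega

namespace List

variable {α : Type*}

lemma insertIdx_eq_take_append_drop (x : α) :
    ∀ {i : ℕ} {l : List α}, i ≤ l.length → l.insertIdx i x = l.take i ++ x :: l.drop i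
  | 0, _, _ => rfl
  | _ + 1, [], h => by simp at h
  | _ + 1, _ :: _, h => by
    rw [insertIdx_succ_cons, insertIdx_eq_take_append_drop x (by simpa using h)]
    rfl

lemma idxOf_insertIdx_of_notMem [BEq α] [LawfulBEq α] {x : α} {l : List α} {i : ℕ}
    (hx : x ∉ l) (hi : i ≤ l.length) : (l.insertIdx i x).idxOf x = i := by
  rw [insertIdx_eq_take_append_drop x hi,
    idxOf_append_of_notMem (fun hm => hx (mem_of_mem_take hm)), idxOf_cons_self]
  simp [hi]

lemma erase_insertIdx_of_notMem [BEq α] [LawfulBEq α] {x : α} {l : List α} {i : ℕ}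
    (hx : x ∉ l) (hi : i ≤ l.length) : (l.insertIdx i x).erase x = l := by
  rw [insertIdx_eq_take_append_drop x hi,
    erase_append_right _ (fun hm => hx (mem_of_mem_take hm)), erase_cons_head, take_append_drop]

lemma erase_insertIdx_cons_cons [BEq α] [LawfulBEq α] {c a x : α} {l : List α} {p : ℕ}
    (hca : c ≠ a) (hxa : x ≠ a) (hp : 1 ≤ p) :
    ((c :: a :: l).insertIdx p x).erase a = c :: l.insertIdx (p - 2) x := by
  -- for `p = 1` the truncated `p - 2` is `0`: `x` ends up right after `c` either way
  obtain rfl | ⟨q, rfl⟩ : p = 1 ∨ ∃ q, p = q + 2 := by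
    rcases p with _ | _ | q <;> simp_all
  · simp [erase_cons_tail, hca, hxa]
  · simp [insertIdx_succ_cons, erase_cons_tail, hca]

lemma rotate_cons_rotate_eq_insertIdx (x : α) {l : List α} {p : ℕ} (hp : p ≤ l.length) :
    (x :: l.rotate p).rotate (l.length + 1 - p) = l.insertIdx p x := by
  have hlen : (x :: l.drop p).length = l.length + 1 - p := by simp; omega
  rw [rotate_eq_drop_append_take hp, insertIdx_eq_take_append_drop x hp, ← cons_append, ← hlen,
    rotate_append_length_eq]

lemma rotate_cons_eq_rotate_concat (x : α) (l : List α) (j : ℕ) :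
    (x :: l).rotate j = (l ++ [x]).rotate (j + l.length) := by
  rw [← rotate_zero (l ++ [x]), ← rotate_cons_succ, rotate_rotate,
    show 0 + 1 + (j + l.length) = j + (x :: l).length by simp; omega,
    ← rotate_mod _ (j + _), Nat.add_mod_right, rotate_mod]

lemma eq_of_rotate_eq_rotate_of_head?_eq {l l' : List α} (hl : l.Nodup)
    (hh : l.head? = l'.head?) {i j : ℕ} (h : l.rotate i = l'.rotate j) : l = l' := by
  obtain ⟨t, rfl⟩ : l ~r l' := (IsRotated.forall l i).symm.trans (h ▸ IsRotated.forall l' j)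
  rcases eq_or_ne l [] with rfl | hne
  · simp
  have hpos := length_pos_of_ne_nil hne
  rw [← rotate_mod, head?_rotate (Nat.mod_lt _ hpos), head?_eq_getElem?] at hh
  rw [← rotate_mod, ← (getElem?_inj hpos hl).1 hh, rotate_zero]

lemma head?_insertIdx_of_pos {l : List α} {x : α} {p : ℕ} (hp : 0 < p) :
    (l.insertIdx p x).head? = l.head? := by
  rw [head?_eq_getElem?, head?_eq_getElem?, getElem?_insertIdx_of_lt hp]

end List

lemma IsPerm.nodup {n : ℕ} {l : List ℕ} (h : IsPerm n l) : l.Nodup :=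
  h.nodup_iff.mpr List.nodup_range'

lemma IsPerm.mem_bounds {n c : ℕ} {l : List ℕ} (h : IsPerm n l) (hc : c ∈ l) : 1 ≤ c ∧ c ≤ n := by
  have := h.subset hc
  rw [List.mem_range'_1] at this
  omega

lemma sig_iterate (i : ℕ) (l : List ℕ) : sig^[i] l = l.rotate i := by
  induction i generalizing l with
  | zero => simp
  | succ i ih => rw [Function.iterate_succ_apply, ih, sig, List.rotate_rotate, add_comm]

section Seed

variable {n : ℕ} {ψ β : List ℕ}

lemma IsSeed.exists_eq_cons (h : IsSeed n ψ) : ∃ a l, ψ = n :: a :: l := by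
  obtain ⟨hlen, hhead, hperm⟩ := h
  match ψ, hlen, hhead, hperm with
  | [], _, hhead, _ => simp at hhead
  | [_], hlen, _, hperm =>
    have := hperm.length_eq
    simp [seedToPerm] at hlen this
    omega
  | _ :: a :: l, _, hhead, _ => exact ⟨a, l, by simpa using hhead⟩

lemma IsSeed.isPerm_insertIdx (h : IsSeed n ψ) {p : ℕ} (hp : p ≤ ψ.length) :
    IsPerm n (ψ.insertIdx p (mis n ψ)) := by
  obtain ⟨a, l, rfl⟩ := h.exists_eq_cons
  exact ((List.perm_insertIdx _ _ hp).trans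
    (List.perm_insertIdx (i := 1) _ _ (by simp)).symm).trans h.2.2

lemma IsSeed.mis_notMem (h : IsSeed n ψ) : mis n ψ ∉ ψ :=
  (List.nodup_cons.mp (h.isPerm_insertIdx (Nat.zero_le _)).nodup).1

lemma IsSeed.mem_bounds {a c : ℕ} {l : List ℕ} (h : IsSeed n (n :: a :: l))
    (hc : c ∈ osucc n a :: a :: l) : 1 ≤ c ∧ c ≤ n - 1 := by
  have hperm : IsPerm n (n :: osucc n a :: a :: l) := h.2.2
  have hcn : c ≠ n := by
    rintro rfl
    exact (List.nodup_cons.mp hperm.nodup).1 hc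
  have := hperm.mem_bounds (List.mem_cons_of_mem n hc)
  omega

lemma sig_iterate_seedShift (hψ : ψ.length = n - 1) {i : ℕ} (hi1 : 1 ≤ i) (hin : i < n) :
    sig^[i] (seedShift n ψ i) = ψ.insertIdx (n - i) (mis n ψ) := by
  rw [seedShift, sig_iterate, ← List.rotate_cons_rotate_eq_insertIdx _ (by omega)]
  congr 1
  omega

lemma exists_insertIdx_of_mem_perms (hψ : ψ ≠ []) {π : List ℕ} (hπ : π ∈ perms n ψ) :
    ∃ p j, 1 ≤ p ∧ p ≤ ψ.length ∧ π = (ψ.insertIdx p (mis n ψ)).rotate j := by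
  obtain ⟨p, j, hp, rfl⟩ := hπ
  rcases Nat.eq_zero_or_pos p with rfl | hp0
  · refine ⟨ψ.length, j + ψ.length, List.length_pos_of_ne_nil hψ, le_rfl, ?_⟩
    rw [List.insertIdx_zero, List.insertIdx_length_self, List.rotate_cons_eq_rotate_concat]
  · exact ⟨p, j, hp0, hp, rfl⟩

lemma insertIdx_eq_insertIdx_of_mem_perms (hψ : IsSeed n ψ) (hβ : IsSeed n β) {π : List ℕ}
    (hπψ : π ∈ perms n ψ) (hπβ : π ∈ perms n β) :
    ∃ p q, 1 ≤ p ∧ p ≤ ψ.length ∧ q ≤ β.length ∧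
      ψ.insertIdx p (mis n ψ) = β.insertIdx q (mis n β) := by
  obtain ⟨a, l, rfl⟩ := hψ.exists_eq_cons
  obtain ⟨b, t, rfl⟩ := hβ.exists_eq_cons
  obtain ⟨p, i, hp1, hp, rfl⟩ := exists_insertIdx_of_mem_perms (by simp) hπψ
  obtain ⟨q, j, hq1, hq, hπ⟩ := exists_insertIdx_of_mem_perms (by simp) hπβ
  refine ⟨p, q, hp1, hp, hq, List.eq_of_rotate_eq_rotate_of_head?_eq
    (hψ.isPerm_insertIdx hp).nodup ?_ hπ⟩
  rw [List.head?_insertIdx_of_pos hp1, List.head?_insertIdx_of_pos hq1]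
  rfl

end Seed

/-- The closed form of son(φ, i) for a seed φ of height at least 2. -/
def sonSeed (n : ℕ) (φ : List ℕ) (i : ℕ) : List ℕ :=
  n :: (φ.drop 2).insertIdx (n - 2 - i) (mis n φ)

section Sons

variable {n a i : ℕ} {l : List ℕ}

lemma isSeed_sonSeed (hφ : IsSeed n (n :: a :: l)) (hh : 2 ≤ height n (n :: a :: l))
    (hi1 : 1 ≤ i) (hi : i ≤ n - 3) :
    IsSeed n (sonSeed n (n :: a :: l) i) ∧ mis n (sonSeed n (n :: a :: l) i) = a := by
  obtain ⟨b, t, rfl, hab, -⟩ := decRun_cons_of_two_le hh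
  have hlen : t.length = n - 4 := by have := hφ.1; simp at this; omega
  obtain ⟨j, hj⟩ : ∃ j, n - 2 - i = j + 1 := ⟨n - 3 - i, by omega⟩
  have hson : sonSeed n (n :: a :: b :: t) i = n :: b :: t.insertIdx j (osucc n a) := by
    rw [sonSeed, hj]
    rfl
  rw [hson]
  refine ⟨⟨?_, rfl, ?_⟩, hab.symm⟩
  · simp [List.length_insertIdx_of_le_length (show j ≤ t.length by omega)]
    omega
  · have := hφ.isPerm_insertIdx (p := j + 3) (by simp; omega)
    rwa [hab] at this ⊢

lemma sig_iterate_seedShift_cons_cons (hφ : IsSeed n (n :: a :: l)) (hi1 : 1 ≤ i)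
    (hi : i ≤ n - 2) :
    sig^[i] (seedShift n (n :: a :: l) i) = n :: a :: l.insertIdx (n - 2 - i) (osucc n a) := by
  rw [sig_iterate_seedShift hφ.1 hi1 (by omega), show n - i = n - 2 - i + 2 by omega]
  rfl

lemma isSon_iff_eq_sonSeed (hφ : IsSeed n (n :: a :: l)) (hh : 2 ≤ height n (n :: a :: l))
    (hi1 : 1 ≤ i) (hi : i ≤ n - 3) {β : List ℕ} :
    IsSon n β (n :: a :: l) i ↔ β = sonSeed n (n :: a :: l) i := by
  rw [IsSon, sig_iterate_seedShift_cons_cons hφ hi1 (by omega)]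
  constructor
  · rintro ⟨hβ, heq⟩
    obtain ⟨b, t, rfl⟩ := hβ.exists_eq_cons
    rw [← (List.cons.inj (List.cons.inj heq).2).2]
    rfl
  · rintro rfl
    obtain ⟨hson, hmis⟩ := isSeed_sonSeed hφ hh hi1 hi
    refine ⟨hson, ?_⟩
    rw [sonSeed, tildeSeed, ← sonSeed, hmis]
    rfl

lemma eq_of_sonSeed_eq (hφ : IsSeed n (n :: a :: l)) {j : ℕ} (hi1 : 1 ≤ i) (hi : i ≤ n - 2)
    (hj1 : 1 ≤ j) (hj : j ≤ n - 2)
    (h : sonSeed n (n :: a :: l) i = sonSeed n (n :: a :: l) j) : i = j := by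
  have hlen : l.length = n - 3 := by have := hφ.1; simp at this; omega
  have hx : osucc n a ∉ l := fun hx => hφ.mis_notMem (by simp [mis, hx])
  have h' : l.insertIdx (n - 2 - i) (osucc n a) = l.insertIdx (n - 2 - j) (osucc n a) :=
    (List.cons.inj h).2
  have := congrArg (List.idxOf (osucc n a)) h'
  rw [List.idxOf_insertIdx_of_notMem hx (by omega),
    List.idxOf_insertIdx_of_notMem hx (by omega)] at this
  omega

lemma exists_eq_sonSeed_of_isParent (hn : 4 ≤ n) {β : List ℕ}
    (h : IsParent n (n :: a :: l) β) :
    ∃ i, 1 ≤ i ∧ i ≤ n - 3 ∧ β = sonSeed n (n :: a :: l) i := by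
  obtain ⟨hφ, hβ, -, ⟨π, hπφ, hπβ⟩, -, hmis⟩ := h
  have ha := hφ.mem_bounds (c := a) (by simp)
  have hmisβ : mis n β = a := osucc_inj_of_pos (osucc_pos _ _) (by omega) hmis.symm
  have hxa : osucc n a ≠ a :=
    osucc_iterate_ne_self (m := 1) (by omega) ha.1 ha.2 one_pos (by omega)
  obtain ⟨p, q, hp1, hp, hq, heq⟩ := insertIdx_eq_insertIdx_of_mem_perms hφ hβ hπφ hπβ
  have hβeq : β = n :: l.insertIdx (p - 2) (osucc n a) := by
    rw [← List.erase_insertIdx_of_notMem hβ.mis_notMem hq, ← heq, hmisβ]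
    exact List.erase_insertIdx_cons_cons (by omega) hxa hp1
  have hp3 : 3 ≤ p := by
    by_contra hp3
    rw [show p - 2 = 0 by omega, List.insertIdx_zero] at hβeq
    rw [hβeq] at hmisβ
    exact osucc_iterate_ne_self (m := 2) (by omega) ha.1 ha.2 two_pos (by omega) hmisβ
  have hlen : l.length = n - 3 := by have := hφ.1; simp at this; omega
  refine ⟨n - p, by simp at hp; omega, by omega, ?_⟩
  rw [hβeq, sonSeed, show n - 2 - (n - p) = p - 2 by simp at hp; omega]
  rfl

lemma height_sonSeed (hφ : IsSeed n (n :: a :: l)) (hh : 2 ≤ height n (n :: a :: l))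
    (hhn : height n (n :: a :: l) ≤ n - 3) (hi1 : 1 ≤ i) (hi : i ≤ n - 3) :
    height n (sonSeed n (n :: a :: l) i) = min (height n (n :: a :: l) - 1) (n - 2 - i) := by
  obtain ⟨b, t, rfl, hab, hrun⟩ := decRun_cons_of_two_le hh
  have hlen : t.length = n - 4 := by have := hφ.1; simp at this; omega
  have hheight : height n (n :: a :: b :: t) = decRun n (b :: t) + 1 := hrun
  change decRun n ((b :: t).insertIdx (n - 2 - i) (osucc n a)) = _
  rw [hheight, Nat.add_sub_cancel, decRun_insertIdx (by omega) (by simp; omega)]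
  intro hj hc
  have hcb : b = (osucc n)^[n - 2 - i - 1] ((b :: t).getD (n - 2 - i - 1) 0) :=
    getD_zero_eq_osucc_iterate_of_lt_decRun n (l := b :: t) (by omega)
  have hcmem : (b :: t).getD (n - 2 - i - 1) 0 ∈ b :: t := by
    rw [List.getD_eq_getElem _ _ (by simp; omega)]
    exact List.getElem_mem _
  generalize (b :: t).getD (n - 2 - i - 1) 0 = c at hc hcb hcmem
  have hcb' := hφ.mem_bounds (c := c) (by simp [hcmem])
  have hcycle : (osucc n)^[n - 2 - i + 2] c = c := by
    rw [show n - 2 - i + 2 = 3 + (n - 2 - i - 1) by omega, Function.iterate_add_apply, ← hcb]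
    exact (hc.trans (congrArg (osucc n) (congrArg (osucc n) hab))).symm
  exact osucc_iterate_ne_self (by omega) hcb'.1 hcb'.2 (by omega) (by omega) hcycle

end Sons

theorem sons_of_nonhub_seed_general (n : ℕ) (φ : List ℕ) (hφ : IsSeed n φ)
    (k : ℕ) (hk : height n φ = k) (hk1 : 1 < k) (hk2 : k ≤ n - 4) :
    (∀ i, 1 ≤ i → i ≤ n - 3 → ∃ β, IsSon n β φ i) ∧
    (∀ β, IsParent n φ β → ∃! i, (1 ≤ i ∧ i ≤ n - 3) ∧ IsSon n β φ i) ∧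
    (∀ i β, 1 ≤ i → i ≤ n - 3 → IsSon n β φ i →
      height n β = min (k - 1) (n - 2 - i)) := by
  obtain ⟨a, l, rfl⟩ := hφ.exists_eq_cons
  subst hk
  have hson {i : ℕ} (hi1 : 1 ≤ i) (hi : i ≤ n - 3) {β : List ℕ} :=
    isSon_iff_eq_sonSeed (β := β) hφ hk1 hi1 hi
  refine ⟨fun i hi1 hi => ⟨_, (hson hi1 hi).2 rfl⟩, fun β hβ => ?_, fun i β hi1 hi hβ => ?_⟩
  · obtain ⟨i, hi1, hi, rfl⟩ := exists_eq_sonSeed_of_isParent (by omega) hβ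
    refine ⟨i, ⟨⟨hi1, hi⟩, (hson hi1 hi).2 rfl⟩, fun j ⟨⟨hj1, hj⟩, hsonj⟩ => ?_⟩
    exact eq_of_sonSeed_eq hφ hj1 (by omega) hi1 (by omega) ((hson hj1 hj).1 hsonj).symm
  · rw [(hson hi1 hi).1 hβ]
    exact height_sonSeed hφ hk1 (by omega) hi1 hi

/-- a non-hub seed φ of height k with 1 < k ≤ n−4 has an i-th son
for every 1 ≤ i ≤ n−3, every child of φ is son(φ, i) for exactly one such i,
and height(son(φ, i)) = Δ(k, i) = min(k−1, n−2−i). -/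
theorem sons_of_nonhub_seed (n : ℕ) (hn : 6 ≤ n) (φ : List ℕ) (hφ : IsSeed n φ)
    (hhub : φ ∉ Hub n) (k : ℕ) (hk : height n φ = k) (hk1 : 1 < k) (hk2 : k ≤ n - 4) :
    (∀ i, 1 ≤ i → i ≤ n - 3 → ∃ β, IsSon n β φ i) ∧
    (∀ β, IsParent n φ β → ∃! i, (1 ≤ i ∧ i ≤ n - 3) ∧ IsSon n β φ i) ∧
    (∀ i β, 1 ≤ i → i ≤ n - 3 → IsSon n β φ i →
      height n β = min (k - 1) (n - 2 - i)) :=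
  sons_of_nonhub_seed_general n φ hφ k hk hk1 hk2
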